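/- Let 0 < τ < 1 and let p satisfy |p| < τ, and define f(α) = (1 + αp)/√(1 + 2αp + α²). Then there exists a unique α > 0 with f(α) = τ, and it equals α*(p,τ) = √(1−τ²)·(p√(1−τ²) + τ√(1−p²)) / (τ² − p²). Moreover, for α > 0, f(α) < τ if and only if α > α*(p,τ). -/

import Mathlib

/-!
If `u`, `v` are unit vectors with `⟪u, v⟫ = p`, then `f α = (1 + α p) / √(1 + 2 α p + α²)` is the
cosine of the angle between `u` and `u + α v`. This angle grows with `α`: indeed
`f' α = -α (1 - p²) / (1 + 2 α p + α²)^(3/2) < 0`, so `f` is strictly decreasing on `[0, ∞)`.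
Squaring `f α = τ` gives the quadratic `(τ² - p²) α² - 2 p (1 - τ²) α - (1 - τ²) = 0`, with
discriminant `4 τ² (1 - τ²) (1 - p²)`; `α*` is its positive root, and `1 + α* p > 0`, so
`f α* = τ`. Uniqueness and the characterization of `f α < τ` then follow from monotonicity.
-/

open Real Set

noncomputable def cosAngle (p α : ℝ) : ℝ := (1 + α * p) / √(1 + 2 * α * p + α ^ 2)

theorem one_add_two_mul_mul_add_sq_pos {p : ℝ} (hp : |p| < 1) (α : ℝ) :
    0 < 1 + 2 * α * p + α ^ 2 := by
  have : p ^ 2 < 1 := (sq_lt_one_iff_abs_lt_one p).2 hp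
  nlinarith [sq_nonneg (α + p)]

theorem hasDerivAt_cosAngle {p : ℝ} (hp : |p| < 1) (α : ℝ) :
    HasDerivAt (cosAngle p)
      (-(α * (1 - p ^ 2)) / ((1 + 2 * α * p + α ^ 2) * √(1 + 2 * α * p + α ^ 2))) α := by
  have hQ := one_add_two_mul_mul_add_sq_pos hp α
  have hnum : HasDerivAt (fun a => 1 + a * p) p α := by
    simpa using ((hasDerivAt_id α).mul_const p).const_add 1
  have hden : HasDerivAt (fun a => 1 + 2 * a * p + a ^ 2) (2 * p + 2 * α) α := by
    refine (((((hasDerivAt_id' α).const_mul 2).mul_const p).const_add 1).fun_add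
      (hasDerivAt_pow 2 α)).congr_deriv ?_
    norm_num
  refine (hnum.div (hden.sqrt hQ.ne') (sqrt_pos.2 hQ).ne').congr_deriv ?_
  have hs := sq_sqrt hQ.le
  have hs0 : 0 < √(1 + 2 * α * p + α ^ 2) := sqrt_pos.2 hQ
  generalize √(1 + 2 * α * p + α ^ 2) = s at hs hs0 ⊢
  rw [← hs]
  field_simp
  linear_combination p * hs

theorem strictAntiOn_cosAngle {p : ℝ} (hp : |p| < 1) : StrictAntiOn (cosAngle p) (Ici 0) := by
  have hderiv := hasDerivAt_cosAngle hp
  refine strictAntiOn_of_deriv_neg (convex_Ici 0)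
    (fun α _ => (hderiv α).continuousAt.continuousWithinAt) fun α hα => ?_
  rw [interior_Ici] at hα
  have hQ := one_add_two_mul_mul_add_sq_pos hp α
  have : p ^ 2 < 1 := (sq_lt_one_iff_abs_lt_one p).2 hp
  rw [(hderiv α).deriv]
  exact div_neg_of_neg_of_pos (neg_neg_of_pos (mul_pos hα (by linarith)))
    (mul_pos hQ (sqrt_pos.2 hQ))

theorem div_sqrt_eq_of_sq_eq {x y τ : ℝ} (hx : 0 < x) (hτ : 0 < τ) (h : x ^ 2 = τ ^ 2 * y) :
    x / √y = τ := by
  have hy : y = (x / τ) ^ 2 := by field_simp; linarith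
  rw [hy, sqrt_sq (by positivity)]
  field_simp

section alphaStar

noncomputable def alphaStar (p τ : ℝ) : ℝ :=
  √(1 - τ ^ 2) * (p * √(1 - τ ^ 2) + τ * √(1 - p ^ 2)) / (τ ^ 2 - p ^ 2)

variable {p τ : ℝ}

theorem sq_sub_sq_pos_of_abs_lt (hp : |p| < τ) : 0 < τ ^ 2 - p ^ 2 :=
  sub_pos.2 (sq_lt_sq' (abs_lt.1 hp).1 (abs_lt.1 hp).2)

theorem mul_sqrt_add_mul_sqrt_pos (hτ1 : τ < 1) (hp : |p| < τ) :
    0 < p * √(1 - τ ^ 2) + τ * √(1 - p ^ 2) := by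
  have hτ : 0 < τ := (abs_nonneg p).trans_lt hp
  have hd := sq_sub_sq_pos_of_abs_lt hp
  have hs2 : √(1 - τ ^ 2) ^ 2 = 1 - τ ^ 2 := sq_sqrt (by nlinarith)
  have hq2 : √(1 - p ^ 2) ^ 2 = 1 - p ^ 2 := sq_sqrt (by nlinarith)
  have hq : 0 < √(1 - p ^ 2) := sqrt_pos.2 (by nlinarith)
  nlinarith [mul_pos hτ hq]

theorem alphaStar_pos (hτ1 : τ < 1) (hp : |p| < τ) : 0 < alphaStar p τ :=
  div_pos (mul_pos (sqrt_pos.2 (by nlinarith [abs_nonneg p]))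
    (mul_sqrt_add_mul_sqrt_pos hτ1 hp)) (sq_sub_sq_pos_of_abs_lt hp)

theorem cosAngle_alphaStar (hτ1 : τ < 1) (hp : |p| < τ) : cosAngle p (alphaStar p τ) = τ := by
  have hτ : 0 < τ := (abs_nonneg p).trans_lt hp
  have hd := sq_sub_sq_pos_of_abs_lt hp
  have hnum := mul_sqrt_add_mul_sqrt_pos hτ1 hp
  have hs2 : √(1 - τ ^ 2) ^ 2 = 1 - τ ^ 2 := sq_sqrt (by nlinarith)
  have hq2 : √(1 - p ^ 2) ^ 2 = 1 - p ^ 2 := sq_sqrt (by nlinarith)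
  have hq : 0 < √(1 - p ^ 2) := sqrt_pos.2 (by nlinarith)
  have hA : alphaStar p τ * (τ ^ 2 - p ^ 2) =
      √(1 - τ ^ 2) * (p * √(1 - τ ^ 2) + τ * √(1 - p ^ 2)) := div_mul_cancel₀ _ hd.ne'
  generalize alphaStar p τ = A at hA ⊢
  generalize √(1 - τ ^ 2) = s at hs2 hA hnum
  generalize √(1 - p ^ 2) = q at hq2 hq hA hnum
  have hlin : (τ ^ 2 - p ^ 2) * (1 + A * p) = τ * q * (τ * q + p * s) := by
    linear_combination p * hA + p ^ 2 * hs2 - τ ^ 2 * hq2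
  have h1Ap : 0 < 1 + A * p :=
    pos_of_mul_pos_right (hlin ▸ mul_pos (mul_pos hτ hq) (by linarith)) hd.le
  have hsq : (1 + A * p) ^ 2 = τ ^ 2 * (1 + 2 * A * p + A ^ 2) := by
    refine mul_left_cancel₀ hd.ne' ?_
    linear_combination (2 * p * (1 - τ ^ 2) - A * (τ ^ 2 - p ^ 2) - s * (p * s + τ * q)) * hA
      - (τ ^ 2 - p ^ 2 + p * s * (p * s + 2 * τ * q)) * hs2 - τ ^ 2 * s ^ 2 * hq2
  exact div_sqrt_eq_of_sq_eq h1Ap hτ hsq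

end alphaStar

theorem unique_threshold_crossing_general
    (τ p : ℝ) (hτ1 : τ < 1) (hp : |p| < τ) :
    (∃! α : ℝ, 0 < α ∧
        (1 + α * p) / Real.sqrt (1 + 2 * α * p + α ^ 2) = τ) ∧
    (0 < Real.sqrt (1 - τ ^ 2) * (p * Real.sqrt (1 - τ ^ 2) + τ * Real.sqrt (1 - p ^ 2)) /
        (τ ^ 2 - p ^ 2) ∧
      (1 + (Real.sqrt (1 - τ ^ 2) * (p * Real.sqrt (1 - τ ^ 2) + τ * Real.sqrt (1 - p ^ 2)) /
          (τ ^ 2 - p ^ 2)) * p) /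
        Real.sqrt (1 + 2 * (Real.sqrt (1 - τ ^ 2) * (p * Real.sqrt (1 - τ ^ 2) + τ * Real.sqrt (1 - p ^ 2)) /
          (τ ^ 2 - p ^ 2)) * p +
          (Real.sqrt (1 - τ ^ 2) * (p * Real.sqrt (1 - τ ^ 2) + τ * Real.sqrt (1 - p ^ 2)) /
          (τ ^ 2 - p ^ 2)) ^ 2) = τ) ∧
    (∀ α : ℝ, 0 < α →
      ((1 + α * p) / Real.sqrt (1 + 2 * α * p + α ^ 2) < τ ↔
        Real.sqrt (1 - τ ^ 2) * (p * Real.sqrt (1 - τ ^ 2) + τ * Real.sqrt (1 - p ^ 2)) /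
          (τ ^ 2 - p ^ 2) < α)) := by
  have hanti : StrictAntiOn (cosAngle p) (Ici 0) := strictAntiOn_cosAngle (hp.trans hτ1)
  have hpos : 0 < alphaStar p τ := alphaStar_pos hτ1 hp
  have hroot : cosAngle p (alphaStar p τ) = τ := cosAngle_alphaStar hτ1 hp
  refine ⟨⟨alphaStar p τ, ⟨hpos, hroot⟩, fun α ⟨hα, hfα⟩ => ?_⟩, ⟨hpos, hroot⟩, fun α hα => ?_⟩
  · exact hanti.injOn (mem_Ici.2 hα.le) (mem_Ici.2 hpos.le) (hfα.trans hroot.symm)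
  · have hlt := hanti.lt_iff_gt (mem_Ici.2 hα.le) (mem_Ici.2 hpos.le)
    rwa [hroot] at hlt

theorem unique_threshold_crossing
    (τ p : ℝ) (hτ : 0 < τ) (hτ1 : τ < 1) (hp : |p| < τ) :
    (∃! α : ℝ, 0 < α ∧
        (1 + α * p) / Real.sqrt (1 + 2 * α * p + α ^ 2) = τ) ∧
    (0 < Real.sqrt (1 - τ ^ 2) * (p * Real.sqrt (1 - τ ^ 2) + τ * Real.sqrt (1 - p ^ 2)) /
        (τ ^ 2 - p ^ 2) ∧
      (1 + (Real.sqrt (1 - τ ^ 2) * (p * Real.sqrt (1 - τ ^ 2) + τ * Real.sqrt (1 - p ^ 2)) /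
          (τ ^ 2 - p ^ 2)) * p) /
        Real.sqrt (1 + 2 * (Real.sqrt (1 - τ ^ 2) * (p * Real.sqrt (1 - τ ^ 2) + τ * Real.sqrt (1 - p ^ 2)) /
          (τ ^ 2 - p ^ 2)) * p +
          (Real.sqrt (1 - τ ^ 2) * (p * Real.sqrt (1 - τ ^ 2) + τ * Real.sqrt (1 - p ^ 2)) /
          (τ ^ 2 - p ^ 2)) ^ 2) = τ) ∧
    (∀ α : ℝ, 0 < α →
      ((1 + α * p) / Real.sqrt (1 + 2 * α * p + α ^ 2) < τ ↔
        Real.sqrt (1 - τ ^ 2) * (p * Real.sqrt (1 - τ ^ 2) + τ * Real.sqrt (1 - p ^ 2)) /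
          (τ ^ 2 - p ^ 2) < α)) :=
  unique_threshold_crossing_general τ p hτ1 hp
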